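/- arXiv:1810.12825 — 4 statements merged into one kernel-verified Lean document; each statement's English description precedes it below -/
import Mathlib

section
/- Among all simple undirected graphs on N vertices with L edges where 1 ≤ L < N-1, the incomplete star graph (a star on L+1 vertices plus N-L-1 isolated vertices) has the maximum possible efficiency, namely (L² + 3L)/(4L₀) with L₀ = N(N-1)/2. -/
open Finset

/-- Efficiency `(1/L₀)·Σ_{i<j} 1/d(i,j)`, `L₀ = N(N-1)/2`, with `0`
contribution from disconnected pairs. -/
noncomputable def efficiency {V : Type*} [Fintype V] [DecidableEq V] (G : SimpleGraph V) : ℝ :=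
  (∑ p ∈ Finset.univ.offDiag, ((G.dist p.1 p.2 : ℝ))⁻¹) /
    ((Fintype.card V : ℝ) * ((Fintype.card V : ℝ) - 1))

/-- The incomplete star graph: hub `0` adjacent to leaves `1, …, L`, the
remaining `N - L - 1` vertices isolated. -/
def incompleteStar (N L : ℕ) : SimpleGraph (Fin N) where
  Adj i j := i ≠ j ∧ ((i.val = 0 ∧ j.val ≤ L) ∨ (j.val = 0 ∧ i.val ≤ L))
  symm := by
    constructor
    intro i j h
    exact ⟨h.1.symm, h.2.elim (fun h' => Or.inr h') (fun h' => Or.inl h')⟩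
  loopless := by constructor; intro i h; exact h.1 rfl

/-! An ordered pair of distinct vertices at distance `d` contributes `1/d`, which is `0` if the
pair is disconnected, `1` if it is an edge and at most `1/2` otherwise; so
`∑ 1/d ≤ (R + 2L)/2`, where `R` counts the ordered pairs of distinct vertices in a common
component, with equality when every distance is at most `2`. A component with `n` vertices and
`e` edges has `n ≤ e + 1`, hence `R = ∑ n(n-1) ≤ ∑ e(e+1) ≤ L² + L`. The incomplete star has a
single nontrivial component, of diameter `2` with `L + 1` vertices, so it attains both bounds. -/

open SimpleGraph

theorem Finset.sum_mul_sub_one_le_of_le_add_one {ι : Type*} (s : Finset ι) (n e : ι → ℕ)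
    (h : ∀ i ∈ s, n i ≤ e i + 1) :
    ∑ i ∈ s, n i * (n i - 1) ≤ (∑ i ∈ s, e i) ^ 2 + ∑ i ∈ s, e i :=
  calc ∑ i ∈ s, n i * (n i - 1)
      ≤ ∑ i ∈ s, (e i ^ 2 + e i) := sum_le_sum fun i hi =>
        calc n i * (n i - 1) ≤ (e i + 1) * e i :=
              Nat.mul_le_mul (h i hi) (Nat.sub_le_of_le_add (h i hi))
          _ = e i ^ 2 + e i := by ring
    _ ≤ (∑ i ∈ s, e i) ^ 2 + ∑ i ∈ s, e i := by
        rw [sum_add_distrib]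
        gcongr
        exact sum_sq_le_sq_sum_of_nonneg fun _ _ => Nat.zero_le _

namespace SimpleGraph

section Pointwise

variable {V : Type*} {G : SimpleGraph V} {u v : V} [Decidable (G.Reachable u v)]
  [Decidable (G.Adj u v)]

theorem inv_dist_le (hne : u ≠ v) :
    ((G.dist u v : ℝ))⁻¹ ≤
      (if G.Reachable u v then 1 / 2 else 0) + (if G.Adj u v then 1 / 2 else 0) := by
  by_cases hr : G.Reachable u v
  · by_cases ha : G.Adj u v
    · simp [hr, ha, dist_eq_one_iff_adj.mpr ha]
      norm_num
    · have h2 : (2 : ℝ) ≤ G.dist u v := by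
        exact_mod_cast hr.one_lt_dist_of_ne_of_not_adj hne ha
      simp only [hr, ha, if_true, if_false, add_zero, one_div]
      exact inv_anti₀ two_pos h2
  · have ha : ¬G.Adj u v := fun ha => hr ha.reachable
    simp [hr, ha, dist_eq_zero_of_not_reachable hr]

theorem inv_dist_eq_of_dist_le_two (hne : u ≠ v) (h : G.dist u v ≤ 2) :
    ((G.dist u v : ℝ))⁻¹ =
      (if G.Reachable u v then 1 / 2 else 0) + (if G.Adj u v then 1 / 2 else 0) := by
  by_cases hr : G.Reachable u v
  · by_cases ha : G.Adj u v
    · simp [hr, ha, dist_eq_one_iff_adj.mpr ha]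
      norm_num
    · have h2 : G.dist u v = 2 := le_antisymm h (hr.one_lt_dist_of_ne_of_not_adj hne ha)
      simp [hr, ha, h2]
  · have ha : ¬G.Adj u v := fun ha => hr ha.reachable
    simp [hr, ha, dist_eq_zero_of_not_reachable hr]

end Pointwise

variable {V : Type*} [Fintype V] (G : SimpleGraph V) [DecidableRel G.Adj]

theorem ConnectedComponent.two_mul_card_edgeSet_toSimpleGraph_le (C : G.ConnectedComponent)
    [DecidableEq G.ConnectedComponent] :
    2 * Nat.card C.toSimpleGraph.edgeSet ≤ #{d : G.Dart | G.connectedComponentMk d.fst = C} := by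
  classical
  rw [Nat.card_eq_fintype_card, ← edgeFinset_card, ← dart_card_eq_twice_card_edges,
    ← Fintype.card_subtype]
  refine Fintype.card_le_of_injective
    (fun d => ⟨C.toSimpleGraph_hom.mapDart d, d.fst.2⟩) fun d₁ d₂ h => ?_
  simp only [Subtype.mk.injEq, Dart.ext_iff, Hom.mapDart_apply, Prod.ext_iff] at h ⊢
  exact ⟨Subtype.ext h.1, Subtype.ext h.2⟩

variable [DecidableEq V]

def reachablePairs : Finset (V × V) :=
  univ.offDiag.filter fun p => G.Reachable p.1 p.2

theorem card_filter_adj_offDiag :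
    #(univ.offDiag.filter fun p : V × V => G.Adj p.1 p.2) = 2 * G.edgeSet.ncard := by
  rw [← coe_edgeFinset, Set.ncard_coe_finset, ← dart_card_eq_twice_card_edges, ← card_univ,
    ← card_image_of_injective univ (Dart.toProd_injective (G := G))]
  congr 1
  ext p
  simp only [mem_filter, mem_offDiag, mem_univ, true_and, mem_image]
  refine ⟨fun ⟨_, h⟩ => ⟨⟨p, h⟩, rfl⟩, ?_⟩
  rintro ⟨d, rfl⟩
  exact ⟨d.adj.ne, d.adj⟩

theorem sum_offDiag_half_reachable_add_half_adj :
    ∑ p ∈ (univ : Finset V).offDiag,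
      ((if G.Reachable p.1 p.2 then (1 / 2 : ℝ) else 0) + (if G.Adj p.1 p.2 then 1 / 2 else 0)) =
      (#G.reachablePairs + 2 * G.edgeSet.ncard) / 2 := by
  rw [sum_add_distrib, ← sum_filter, ← sum_filter, sum_const, sum_const,
    card_filter_adj_offDiag, reachablePairs, nsmul_eq_mul, nsmul_eq_mul]
  push_cast
  ring

theorem sum_inv_dist_le :
    ∑ p ∈ (univ : Finset V).offDiag, ((G.dist p.1 p.2 : ℝ))⁻¹ ≤
      (#G.reachablePairs + 2 * G.edgeSet.ncard) / 2 := by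
  rw [← sum_offDiag_half_reachable_add_half_adj]
  exact sum_le_sum fun p hp => inv_dist_le (mem_offDiag.mp hp).2.2

theorem sum_inv_dist_eq_of_forall_dist_le_two (h : ∀ u v, G.dist u v ≤ 2) :
    ∑ p ∈ (univ : Finset V).offDiag, ((G.dist p.1 p.2 : ℝ))⁻¹ =
      (#G.reachablePairs + 2 * G.edgeSet.ncard) / 2 := by
  rw [← sum_offDiag_half_reachable_add_half_adj]
  refine sum_congr rfl fun p (hp : p ∈ univ.offDiag) => ?_
  exact inv_dist_eq_of_dist_le_two (mem_offDiag.mp hp).2.2 (h _ _)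

theorem card_reachablePairs_eq_sum :
    #G.reachablePairs = ∑ C : G.ConnectedComponent, Nat.card C * (Nat.card C - 1) := by
  let _ : DecidableEq G.ConnectedComponent := Classical.decEq _
  rw [card_eq_sum_card_fiberwise (f := fun p : V × V => G.connectedComponentMk p.1)
    (t := univ) fun _ _ => mem_coe.mpr (mem_univ _)]
  refine sum_congr rfl ?_
  intro C _
  have hfiber : {p ∈ G.reachablePairs | G.connectedComponentMk p.1 = C} =
      (univ.filter fun v => G.connectedComponentMk v = C).offDiag := by
    ext ⟨u, v⟩
    simp only [reachablePairs, mem_filter, mem_offDiag, mem_univ, true_and]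
    rw [← ConnectedComponent.eq]
    constructor
    · rintro ⟨⟨hne, huv⟩, rfl⟩
      exact ⟨rfl, huv.symm, hne⟩
    · rintro ⟨rfl, hvu, hne⟩
      exact ⟨⟨hne, hvu.symm⟩, rfl⟩
  have hcard : Nat.card C = #(univ.filter fun v => G.connectedComponentMk v = C) := by
    change Nat.card {v // G.connectedComponentMk v = C} = _
    rw [Nat.card_eq_fintype_card, Fintype.card_subtype]
  rw [hfiber, offDiag_card, hcard, Nat.mul_sub_one]

theorem sum_card_edgeSet_toSimpleGraph_le :
    ∑ C : G.ConnectedComponent, Nat.card C.toSimpleGraph.edgeSet ≤ G.edgeSet.ncard := by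
  let _ : DecidableEq G.ConnectedComponent := Classical.decEq _
  have hdarts : ∑ C : G.ConnectedComponent, #{d : G.Dart | G.connectedComponentMk d.fst = C} =
      2 * G.edgeSet.ncard := by
    rw [← card_eq_sum_card_fiberwise (f := fun d : G.Dart => G.connectedComponentMk d.fst)
      fun _ _ => mem_coe.mpr (mem_univ _), card_univ,
      dart_card_eq_twice_card_edges, ← coe_edgeFinset, Set.ncard_coe_finset]
  have := sum_le_sum fun (C : G.ConnectedComponent) (_ : C ∈ univ) =>
    C.two_mul_card_edgeSet_toSimpleGraph_le
  rw [← mul_sum, hdarts] at this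
  exact Nat.le_of_mul_le_mul_left this two_pos

theorem card_reachablePairs_le :
    #G.reachablePairs ≤ G.edgeSet.ncard ^ 2 + G.edgeSet.ncard := by
  rw [card_reachablePairs_eq_sum]
  refine (sum_mul_sub_one_le_of_le_add_one _ _ _ fun C _ =>
    C.connected_toSimpleGraph.card_vert_le_card_edgeSet_add_one).trans ?_
  have := G.sum_card_edgeSet_toSimpleGraph_le
  gcongr

end SimpleGraph

section Efficiency

variable {V : Type*} [Fintype V] [DecidableEq V] (G : SimpleGraph V)

theorem efficiency_le :
    efficiency G ≤ ((G.edgeSet.ncard : ℝ) ^ 2 + 3 * G.edgeSet.ncard) / 2 /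
      ((Fintype.card V : ℝ) * ((Fintype.card V : ℝ) - 1)) := by
  classical
  have hpos : (0 : ℝ) ≤ (Fintype.card V : ℝ) * ((Fintype.card V : ℝ) - 1) := by
    rcases Nat.eq_zero_or_pos (Fintype.card V) with h | h
    · simp [h]
    · have : (1 : ℝ) ≤ Fintype.card V := by exact_mod_cast h
      nlinarith
  refine div_le_div_of_nonneg_right ((G.sum_inv_dist_le).trans ?_) hpos
  have : (#G.reachablePairs : ℝ) ≤ G.edgeSet.ncard ^ 2 + G.edgeSet.ncard := by
    exact_mod_cast G.card_reachablePairs_le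
  linarith

theorem efficiency_eq_of_forall_dist_le_two [DecidableRel G.Adj] (h : ∀ u v, G.dist u v ≤ 2) :
    efficiency G = (#G.reachablePairs + 2 * G.edgeSet.ncard) / 2 /
      ((Fintype.card V : ℝ) * ((Fintype.card V : ℝ) - 1)) := by
  rw [efficiency, G.sum_inv_dist_eq_of_forall_dist_le_two h]

end Efficiency

namespace incompleteStar

variable {N L : ℕ}

theorem le_of_adj {i j : Fin N} (h : (incompleteStar N L).Adj i j) :
    i.val ≤ L ∧ j.val ≤ L := by
  rcases h.2 with ⟨hi, hj⟩ | ⟨hj, hi⟩ <;> omega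

theorem eq_or_adj_hub {i : Fin N} (hi : i.val ≤ L) :
    ⟨0, i.pos⟩ = i ∨ (incompleteStar N L).Adj ⟨0, i.pos⟩ i :=
  (em _).imp_right fun h => ⟨h, Or.inl ⟨rfl, hi⟩⟩

theorem reachable_hub {i : Fin N} (hi : i.val ≤ L) :
    (incompleteStar N L).Reachable ⟨0, i.pos⟩ i :=
  (eq_or_adj_hub hi).elim (fun h => h ▸ Reachable.refl _) Adj.reachable

theorem dist_hub_le_one {i : Fin N} (hi : i.val ≤ L) :
    (incompleteStar N L).dist ⟨0, i.pos⟩ i ≤ 1 :=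
  (eq_or_adj_hub hi).elim (fun h => by simp [h]) fun h => (dist_eq_one_iff_adj.mpr h).le

theorem le_of_reachable_of_ne {i j : Fin N} (h : (incompleteStar N L).Reachable i j)
    (hne : i ≠ j) : i.val ≤ L := by
  obtain ⟨w⟩ := h
  cases w with
  | nil => exact absurd rfl hne
  | cons h _ => exact (le_of_adj h).1

theorem reachable_iff {i j : Fin N} :
    (incompleteStar N L).Reachable i j ↔ i = j ∨ (i.val ≤ L ∧ j.val ≤ L) := by
  refine ⟨fun h => or_iff_not_imp_left.mpr fun hne =>
    ⟨le_of_reachable_of_ne h hne, le_of_reachable_of_ne h.symm (Ne.symm hne)⟩, ?_⟩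
  rintro (rfl | ⟨hi, hj⟩)
  · rfl
  · exact (reachable_hub hi).symm.trans (reachable_hub hj)

theorem dist_le_two (i j : Fin N) : (incompleteStar N L).dist i j ≤ 2 := by
  by_cases h : (incompleteStar N L).Reachable i j
  · rcases reachable_iff.mp h with rfl | ⟨hi, hj⟩
    · simp
    · refine ((reachable_hub hi).symm.dist_triangle_left j).trans ?_
      rw [dist_comm]
      exact add_le_add (dist_hub_le_one hi) (dist_hub_le_one hj)
  · simp [dist_eq_zero_of_not_reachable h]

theorem ncard_edgeSet (hL : L < N) : (incompleteStar N L).edgeSet.ncard = L := by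
  have hub : (0 : ℕ) < N := by omega
  have hedges : (incompleteStar N L).edgeSet =
      ((Ioc (⟨0, hub⟩ : Fin N) ⟨L, hL⟩).image fun j => s(⟨0, hub⟩, j) : Finset _) := by
    ext e
    induction e with
    | _ a b =>
      simp only [mem_edgeSet, coe_image, coe_Ioc, Set.mem_image, Set.mem_Ioc, Sym2.eq_iff,
        incompleteStar, ne_eq, Fin.ext_iff, Fin.lt_def, Fin.le_def]
      constructor
      · rintro ⟨hne, ⟨ha, hb⟩ | ⟨hb, ha⟩⟩
        · exact ⟨b, ⟨by omega, hb⟩, Or.inl ⟨ha.symm, rfl⟩⟩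
        · exact ⟨a, ⟨by omega, ha⟩, Or.inr ⟨hb.symm, rfl⟩⟩
      · rintro ⟨j, hj, h⟩
        omega
  rw [hedges, Set.ncard_coe_finset,
    card_image_of_injective _ fun j k h => Sym2.congr_right.mp h, Fin.card_Ioc]
  rfl

theorem card_reachablePairs [DecidableRel (incompleteStar N L).Adj] (hL : L < N) :
    #(incompleteStar N L).reachablePairs = L ^ 2 + L := by
  have hpairs : (incompleteStar N L).reachablePairs = (Iic (⟨L, hL⟩ : Fin N)).offDiag := by
    ext ⟨i, j⟩
    simp only [reachablePairs, mem_filter, mem_offDiag, mem_univ, true_and, mem_Iic,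
      reachable_iff, Fin.le_def]
    tauto
  rw [hpairs, offDiag_card, Fin.card_Iic, Fin.val_mk]
  have : (L + 1) * (L + 1) = L ^ 2 + L + (L + 1) := by ring
  omega

end incompleteStar

theorem stmt_5_general (N L : ℕ) (hL2 : L < N - 1) :
    (∀ G : SimpleGraph (Fin N), G.edgeSet.ncard = L →
      efficiency G ≤
        ((L : ℝ) ^ 2 + 3 * (L : ℝ)) / (4 * ((N : ℝ) * ((N : ℝ) - 1) / 2))) ∧
    (incompleteStar N L).edgeSet.ncard = L ∧
    efficiency (incompleteStar N L) =
      ((L : ℝ) ^ 2 + 3 * (L : ℝ)) / (4 * ((N : ℝ) * ((N : ℝ) - 1) / 2)) := by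
  classical
  have hL : L < N := by omega
  have hscale (x : ℝ) :
      x / 2 / ((N : ℝ) * ((N : ℝ) - 1)) = x / (4 * ((N : ℝ) * ((N : ℝ) - 1) / 2)) := by
    rw [div_div]
    ring_nf
  refine ⟨fun G hG => ?_, incompleteStar.ncard_edgeSet hL, ?_⟩
  · have := efficiency_le G
    rwa [Fintype.card_fin, hG, hscale] at this
  · rw [efficiency_eq_of_forall_dist_le_two _ incompleteStar.dist_le_two, Fintype.card_fin,
      hscale, incompleteStar.card_reachablePairs hL, incompleteStar.ncard_edgeSet hL]
    push_cast
    ring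

theorem stmt_5 (N L : ℕ) (hL1 : 1 ≤ L) (hL2 : L < N - 1) :
    (∀ G : SimpleGraph (Fin N), G.edgeSet.ncard = L →
      efficiency G ≤
        ((L : ℝ) ^ 2 + 3 * (L : ℝ)) / (4 * ((N : ℝ) * ((N : ℝ) - 1) / 2))) ∧
    (incompleteStar N L).edgeSet.ncard = L ∧
    efficiency (incompleteStar N L) =
      ((L : ℝ) ^ 2 + 3 * (L : ℝ)) / (4 * ((N : ℝ) * ((N : ℝ) - 1) / 2)) :=
  stmt_5_general N L hL2
end

section
/- Let G be a 'K-set graph' on N vertices: a disjoint union of complete graphs of sizes M₁, ..., M_m with Σᵢ Mᵢ = N, so that L = Σᵢ Mᵢ(Mᵢ-1)/2. Then the efficiency of G equals L/L₀ where L₀ = N(N-1)/2, and this is the smallest efficiency any graph on N vertices with L edges can have. -/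
open Finset

/-- A `K`-set graph: a disjoint union of complete graphs, encoded by a
colouring `c`; two distinct vertices are adjacent iff they have the same
colour.  The cliques are the colour classes, of sizes `M₁, …, M_m` with
`Σᵢ Mᵢ = N` and `L = Σᵢ Mᵢ(Mᵢ-1)/2` edges in total. -/
def kSetGraph (N : ℕ) (c : Fin N → ℕ) : SimpleGraph (Fin N) where
  Adj i j := i ≠ j ∧ c i = c j
  symm := ⟨by intro i j h; exact ⟨h.1.symm, h.2.symm⟩⟩
  loopless := ⟨by intro i h; exact h.1 rfl⟩

/-!
Each pair of distinct vertices contributes `1 / d ≤ 1` to the efficiency, with `1` exactly for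
adjacent pairs and `0` for disconnected ones, so the sum is at least twice the number of edges.
In a disjoint union of cliques, distinct connected vertices are adjacent, so equality holds.
-/

namespace SimpleGraph

variable {V : Type*} (G : SimpleGraph V) [DecidableRel G.Adj]

lemma indicator_adj_le_inv_dist (u v : V) :
    (if G.Adj u v then (1 : ℝ) else 0) ≤ (G.dist u v : ℝ)⁻¹ := by
  split_ifs with h
  · simp [dist_eq_one_iff_adj.2 h]
  · positivity

lemma inv_dist_eq_indicator_adj {u v : V} (h : G.Reachable u v → G.Adj u v) :
    (G.dist u v : ℝ)⁻¹ = if G.Adj u v then 1 else 0 := by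
  split_ifs with hadj
  · simp [dist_eq_one_iff_adj.2 hadj]
  · simp [dist_eq_zero_of_not_reachable (mt h hadj)]

variable [Fintype V]

lemma sum_offDiag_indicator_adj :
    ∑ p ∈ univ.offDiag, (if G.Adj p.1 p.2 then (1 : ℝ) else 0) = 2 * #G.edgeFinset := by
  have : {p ∈ (univ : Finset V).offDiag | G.Adj p.1 p.2} =
      {p ∈ (univ : Finset (V × V)) | G.Adj p.1 p.2} := by
    ext ⟨u, v⟩
    simpa using fun h : G.Adj u v => h.ne
  rw [sum_boole, this, ← two_mul_card_edgeFinset]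
  push_cast
  rfl

lemma two_mul_card_edgeFinset_le_sum_inv_dist :
    (2 * #G.edgeFinset : ℝ) ≤ ∑ p ∈ univ.offDiag, (G.dist p.1 p.2 : ℝ)⁻¹ :=
  G.sum_offDiag_indicator_adj ▸ sum_le_sum fun p _ => G.indicator_adj_le_inv_dist p.1 p.2

lemma sum_inv_dist_eq_two_mul_card_edgeFinset
    (h : ∀ u v, u ≠ v → G.Reachable u v → G.Adj u v) :
    ∑ p ∈ univ.offDiag, (G.dist p.1 p.2 : ℝ)⁻¹ = 2 * #G.edgeFinset := by
  rw [← G.sum_offDiag_indicator_adj]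
  refine sum_congr rfl fun p hp => G.inv_dist_eq_indicator_adj (h _ _ ?_)
  exact (mem_offDiag.1 hp).2.2

end SimpleGraph

section efficiency

variable {V : Type*} [Fintype V] [DecidableEq V] (G : SimpleGraph V) [DecidableRel G.Adj]

lemma two_mul_card_edgeFinset_div_le_efficiency :
    2 * #G.edgeFinset / ((Fintype.card V : ℝ) * (Fintype.card V - 1)) ≤ efficiency G := by
  refine div_le_div_of_nonneg_right G.two_mul_card_edgeFinset_le_sum_inv_dist ?_
  rcases (Fintype.card V).eq_zero_or_pos with h | h
  · simp [h]
  · have : (1 : ℝ) ≤ Fintype.card V := by exact_mod_cast h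
    positivity

lemma efficiency_eq_of_reachable_imp_adj (h : ∀ u v, u ≠ v → G.Reachable u v → G.Adj u v) :
    efficiency G = 2 * #G.edgeFinset / ((Fintype.card V : ℝ) * (Fintype.card V - 1)) := by
  rw [efficiency, G.sum_inv_dist_eq_two_mul_card_edgeFinset h]

end efficiency

lemma kSetGraph_reachable_colour_eq {N : ℕ} {c : Fin N → ℕ} {i j : Fin N}
    (h : (kSetGraph N c).Reachable i j) : c i = c j := by
  obtain ⟨w⟩ := h
  induction w with
  | nil => rfl
  | cons h _ ih => exact h.2.trans ih

theorem stmt_8_general (N L : ℕ) (c : Fin N → ℕ)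
    (hL : (kSetGraph N c).edgeSet.ncard = L) :
    efficiency (kSetGraph N c) = (L : ℝ) / ((N : ℝ) * ((N : ℝ) - 1) / 2) ∧
    ∀ G : SimpleGraph (Fin N), G.edgeSet.ncard = L →
      (L : ℝ) / ((N : ℝ) * ((N : ℝ) - 1) / 2) ≤ efficiency G := by
  classical
  have card_edgeFinset : ∀ G : SimpleGraph (Fin N), G.edgeSet.ncard = L → #G.edgeFinset = L :=
    fun G hG => by rw [← hG, ← SimpleGraph.coe_edgeFinset, Set.ncard_coe_finset]
  rw [div_div_eq_mul_div, mul_comm]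
  constructor
  · have reachable_imp_adj :
        ∀ i j, i ≠ j → (kSetGraph N c).Reachable i j → (kSetGraph N c).Adj i j :=
      fun _ _ hij h => ⟨hij, kSetGraph_reachable_colour_eq h⟩
    rw [efficiency_eq_of_reachable_imp_adj _ reachable_imp_adj, card_edgeFinset _ hL,
      Fintype.card_fin]
  · intro G hG
    simpa [card_edgeFinset G hG] using two_mul_card_edgeFinset_div_le_efficiency G

theorem stmt_8 (N L : ℕ) (hN : 2 ≤ N) (c : Fin N → ℕ)
    (hL : (kSetGraph N c).edgeSet.ncard = L) :
    efficiency (kSetGraph N c) = (L : ℝ) / ((N : ℝ) * ((N : ℝ) - 1) / 2) ∧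
    ∀ G : SimpleGraph (Fin N), G.edgeSet.ncard = L →
      (L : ℝ) / ((N : ℝ) * ((N : ℝ) - 1) / 2) ≤ efficiency G :=
  stmt_8_general N L c hL
end

section
/- Let G be an ultra-long graph on N vertices with L edges, composed of a complete subgraph of size N_c, a path (tail) of N_t = N - N_c vertices, and L_e ≥ 1 edges joining the first tail vertex to L_e vertices of the clique, where L_c = N_c(N_c-1)/2 and L = L_c + (N_t - 1) + L_e. Then the average pathlength of G equals (1/L₀)·[L_c - N_t(L - N) + (N³ - N_c³ - 7N_t)/6], where L₀ = N(N-1)/2. -/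
open Finset

/-- Average shortest-path length `(1/L₀)·Σ_{i<j} d(i,j)`, `L₀ = N(N-1)/2`,
written as the sum over ordered pairs divided by `N(N-1)`. -/
noncomputable def avgPathLen {V : Type*} [Fintype V] [DecidableEq V] (G : SimpleGraph V) : ℝ :=
  (∑ p ∈ Finset.univ.offDiag, (G.dist p.1 p.2 : ℝ)) /
    ((Fintype.card V : ℝ) * ((Fintype.card V : ℝ) - 1))

/-- An ultra-long graph: a complete graph on the vertices `0, …, N_c-1`, a path
(the tail) on the vertices `N_c, …, N-1`, and `L_e` edges joining the first
tail vertex `N_c` to the clique vertices `0, …, L_e-1`. -/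
def ultraLongGraph (N Nc Le : ℕ) : SimpleGraph (Fin N) where
  Adj i j := i ≠ j ∧
    ((i.val < Nc ∧ j.val < Nc) ∨
     (Nc ≤ i.val ∧ j.val = i.val + 1) ∨
     (Nc ≤ j.val ∧ i.val = j.val + 1) ∨
     (i.val < Le ∧ j.val = Nc) ∨
     (j.val < Le ∧ i.val = Nc))
  symm := by
    constructor
    intro i j h
    refine ⟨h.1.symm, ?_⟩
    rcases h.2 with h' | h' | h' | h' | h'
    · exact Or.inl ⟨h'.2, h'.1⟩
    · exact Or.inr (Or.inr (Or.inl h'))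
    · exact Or.inr (Or.inl h')
    · exact Or.inr (Or.inr (Or.inr (Or.inr h')))
    · exact Or.inr (Or.inr (Or.inr (Or.inl h')))
  loopless := by constructor; intro i h; exact h.1 rfl

/-!
Every distance has an explicit closed form. Upper bounds come from walks along the tail,
entered from the clique through the first tail vertex `c₁` (via a neighbour of `c₁` if
necessary). Matching lower bounds come from a level function that changes by at most one along
every edge, so that `|level u - level v| ≤ d(u, v)`. The sum of all distances is then computed
by induction on the length of the tail: appending a tail vertex at distance `s + 1` from the
clique adds twice its row sum `s (s + 1) / 2 + N_c (s + 1) + (N_c - L_e)`.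
-/

open SimpleGraph

namespace SimpleGraph

variable {V : Type*} {G : SimpleGraph V}

theorem Walk.abs_sub_le_length (f : V → ℤ) (hf : ∀ u v, G.Adj u v → |f u - f v| ≤ 1)
    {u v : V} (p : G.Walk u v) : |f u - f v| ≤ p.length := by
  induction p with
  | nil => simp
  | @cons u w v h p ih =>
    calc |f u - f v| ≤ |f u - f w| + |f w - f v| := abs_sub_le _ _ _
      _ ≤ 1 + p.length := add_le_add (hf u w h) ih
      _ = (cons h p).length := by rw [length_cons]; push_cast; ring

theorem dist_eq_of_edist_le_of_le_abs_sub (f : V → ℤ)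
    (hf : ∀ u v, G.Adj u v → |f u - f v| ≤ 1) {u v : V} {m : ℕ}
    (hm : G.edist u v ≤ m) (hfm : (m : ℤ) ≤ |f u - f v|) : G.dist u v = m := by
  have hreach : G.Reachable u v :=
    reachable_of_edist_ne_top (ne_top_of_le_ne_top (ENat.natCast_ne_top m) hm)
  obtain ⟨p, hp⟩ := hreach.exists_walk_length_eq_dist
  have hle : G.dist u v ≤ m := by
    rw [← ENat.natCast_le_natCast, hreach.coe_dist_eq_edist]
    exact hm
  have hge : (m : ℤ) ≤ G.dist u v := hfm.trans (hp ▸ p.abs_sub_le_length f hf)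
  omega

end SimpleGraph

-- Chosen so that `d(u, v) = |level u - level v|` as soon as `u` or `v` lies on the tail.
def ultraLongLevel (Nc Le i : ℕ) : ℤ :=
  if i < Le then 1 else if i < Nc then 0 else i + 2 - Nc

def ultraLongDist (Nc Le i j : ℕ) : ℤ :=
  if i = j then 0
  else if i < Nc ∧ j < Nc then 1
  else |ultraLongLevel Nc Le i - ultraLongLevel Nc Le j|

theorem ultraLongDist_comm (Nc Le i j : ℕ) :
    ultraLongDist Nc Le i j = ultraLongDist Nc Le j i := by
  unfold ultraLongDist
  grind

section UltraLongGraph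

variable {N Nc Le : ℕ}

theorem ultraLongGraph_adj_of_lt_of_lt {u v : Fin N} (huv : u ≠ v) (hu : u.val < Nc)
    (hv : v.val < Nc) : (ultraLongGraph N Nc Le).Adj u v :=
  ⟨huv, .inl ⟨hu, hv⟩⟩

theorem ultraLongGraph_adj_succ {u v : Fin N} (hu : Nc ≤ u.val) (hv : v.val = u.val + 1) :
    (ultraLongGraph N Nc Le).Adj u v :=
  ⟨fun h ↦ by simp [h] at hv, .inr (.inl ⟨hu, hv⟩)⟩

theorem ultraLongGraph_adj_of_lt_of_eq (hLe : Le ≤ Nc) {u v : Fin N} (hu : u.val < Le)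
    (hv : v.val = Nc) : (ultraLongGraph N Nc Le).Adj u v :=
  ⟨fun h ↦ by simp [h] at hu; omega, .inr (.inr (.inr (.inl ⟨hu, hv⟩)))⟩

theorem abs_ultraLongLevel_sub_le_one (hLe : Le ≤ Nc) (u v : Fin N)
    (h : (ultraLongGraph N Nc Le).Adj u v) :
    |ultraLongLevel Nc Le u - ultraLongLevel Nc Le v| ≤ 1 := by
  obtain ⟨-, h⟩ := h
  rw [abs_le]
  unfold ultraLongLevel
  rcases h with h | h | h | h | h <;> split_ifs <;> omega

theorem edist_ultraLongGraph_le_of_tail {u v : Fin N} (hu : Nc ≤ u.val) (huv : u ≤ v) :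
    (ultraLongGraph N Nc Le).edist u v ≤ (v.val - u.val : ℕ) := by
  obtain ⟨k, hk⟩ : ∃ k, v.val = u.val + k := ⟨v.val - u.val, by omega⟩
  induction k generalizing v with
  | zero => simp [Fin.ext hk]
  | succ k ih =>
    let w : Fin N := ⟨u.val + k, by omega⟩
    calc (ultraLongGraph N Nc Le).edist u v
        ≤ (ultraLongGraph N Nc Le).edist u w + (ultraLongGraph N Nc Le).edist w v :=
          SimpleGraph.edist_triangle
      _ ≤ k + 1 := by
          gcongr
          · simpa [w] using ih (v := w) (Fin.mk_le_mk.mpr (by omega)) rfl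
          · exact (edist_eq_one_iff_adj.mpr (ultraLongGraph_adj_succ (by simp [w]; omega)
              (by simp [w]; omega))).le
      _ = (v.val - u.val : ℕ) := by rw [hk]; simp

theorem edist_ultraLongGraph_le_of_clique (hLe1 : 1 ≤ Le) (hLe2 : Le ≤ Nc) {u v : Fin N}
    (hu : u.val < Nc) (hv : Nc ≤ v.val) :
    (ultraLongGraph N Nc Le).edist u v ≤
      ((if u.val < Le then 1 else 2) + (v.val - Nc) : ℕ) := by
  let c₁ : Fin N := ⟨Nc, by omega⟩
  have hc₁ : (ultraLongGraph N Nc Le).edist u c₁ ≤ (if u.val < Le then 1 else 2 : ℕ) := by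
    split_ifs with hLe
    · exact (edist_eq_one_iff_adj.mpr (ultraLongGraph_adj_of_lt_of_eq hLe2 hLe rfl)).le
    · let a : Fin N := ⟨0, by omega⟩
      calc (ultraLongGraph N Nc Le).edist u c₁
          ≤ (ultraLongGraph N Nc Le).edist u a + (ultraLongGraph N Nc Le).edist a c₁ :=
            SimpleGraph.edist_triangle
        _ = 1 + 1 := by
          rw [edist_eq_one_iff_adj.mpr (ultraLongGraph_adj_of_lt_of_lt
              (fun h ↦ by simp [h, a] at hLe; omega) hu (by simp [a]; omega)),
            edist_eq_one_iff_adj.mpr (ultraLongGraph_adj_of_lt_of_eq hLe2 (by simp [a]; omega) rfl)]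
        _ = (2 : ℕ) := rfl
  calc (ultraLongGraph N Nc Le).edist u v
      ≤ (ultraLongGraph N Nc Le).edist u c₁ + (ultraLongGraph N Nc Le).edist c₁ v :=
        SimpleGraph.edist_triangle
    _ ≤ _ := by
        rw [Nat.cast_add]
        exact add_le_add hc₁ (edist_ultraLongGraph_le_of_tail (u := c₁) le_rfl hv)

theorem ultraLongGraph_dist (hLe1 : 1 ≤ Le) (hLe2 : Le ≤ Nc) (u v : Fin N) :
    ((ultraLongGraph N Nc Le).dist u v : ℤ) = ultraLongDist Nc Le u v := by
  wlog huv : u ≤ v generalizing u v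
  · rw [dist_comm, this v u (le_of_not_ge huv), ultraLongDist_comm]
  unfold ultraLongDist
  split_ifs with heq hcl
  · simp [Fin.ext heq]
  · exact_mod_cast dist_eq_one_iff_adj.mpr
      (ultraLongGraph_adj_of_lt_of_lt (fun h ↦ heq (congrArg Fin.val h)) hcl.1 hcl.2)
  · have hv : Nc ≤ v.val := by omega
    rcases lt_or_ge u.val Nc with hu | hu
    · have hm : (((if u.val < Le then 1 else 2) + (v.val - Nc) : ℕ) : ℤ) =
          |ultraLongLevel Nc Le u - ultraLongLevel Nc Le v| := by
        unfold ultraLongLevel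
        split_ifs <;> grind
      rw [dist_eq_of_edist_le_of_le_abs_sub _ (abs_ultraLongLevel_sub_le_one hLe2)
        (edist_ultraLongGraph_le_of_clique hLe1 hLe2 hu hv) hm.le, hm]
    · have hm : ((v.val - u.val : ℕ) : ℤ) =
          |ultraLongLevel Nc Le u - ultraLongLevel Nc Le v| := by
        unfold ultraLongLevel
        split_ifs <;> grind
      rw [dist_eq_of_edist_le_of_le_abs_sub _ (abs_ultraLongLevel_sub_le_one hLe2)
        (edist_ultraLongGraph_le_of_tail hu huv) hm.le, hm]

end UltraLongGraph

theorem sum_range_succ_sum_range_succ_of_symm {M : Type*} [AddCommMonoid M] (f : ℕ → ℕ → M)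
    (hf : ∀ i j, f i j = f j i) (n : ℕ) (hn : f n n = 0) :
    ∑ i ∈ range (n + 1), ∑ j ∈ range (n + 1), f i j =
      ∑ i ∈ range n, ∑ j ∈ range n, f i j + 2 • ∑ i ∈ range n, f i n := by
  simp only [sum_range_succ, sum_add_distrib, hn, add_zero, two_nsmul]
  rw [sum_congr rfl fun j _ ↦ hf n j]
  abel

section Sums

variable {Nc Le : ℕ}

theorem sum_ultraLongLevel (hLe : Le ≤ Nc) (s : ℕ) :
    ∑ i ∈ range (Nc + s), (ultraLongLevel Nc Le i : ℝ) = Le + s * (s + 3) / 2 := by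
  induction s with
  | zero =>
    obtain ⟨m, rfl⟩ := Nat.exists_eq_add_of_le hLe
    simp only [add_zero, sum_range_add, ultraLongLevel, Int.cast_ite]
    rw [sum_ite_of_true fun i hi ↦ mem_range.mp hi, sum_ite_of_false fun i _ ↦ by omega,
      sum_ite_of_true fun i hi ↦ by simp at hi; omega]
    simp
  | succ s ih =>
    rw [← add_assoc, sum_range_succ, ih, ultraLongLevel, if_neg (by omega), if_neg (by omega)]
    push_cast
    ring

theorem sum_ultraLongDist_tail_row (hLe : Le ≤ Nc) (s : ℕ) :
    ∑ i ∈ range (Nc + s), (ultraLongDist Nc Le i (Nc + s) : ℝ) =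
      s * (s + 1) / 2 + Nc * (s + 1) + (Nc - Le) := by
  have hterm : ∀ i ∈ range (Nc + s),
      (ultraLongDist Nc Le i (Nc + s) : ℝ) = (s + 2 : ℝ) - ultraLongLevel Nc Le i := by
    intro i hi
    have hi := mem_range.mp hi
    have : ultraLongDist Nc Le i (Nc + s) = s + 2 - ultraLongLevel Nc Le i := by
      unfold ultraLongDist ultraLongLevel
      split_ifs <;> grind
    exact_mod_cast this
  rw [sum_congr rfl hterm, sum_sub_distrib, sum_const, card_range, nsmul_eq_mul,
    sum_ultraLongLevel hLe]
  push_cast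
  ring

theorem sum_ultraLongDist_clique {n : ℕ} (hn : n ≤ Nc) :
    ∑ i ∈ range n, ∑ j ∈ range n, (ultraLongDist Nc Le i j : ℝ) = n * (n - 1) := by
  induction n with
  | zero => simp
  | succ n ih =>
    have hrow : ∀ i ∈ range n, (ultraLongDist Nc Le i n : ℝ) = 1 := by
      intro i hi
      have hi := mem_range.mp hi
      simp [ultraLongDist, hi.ne, show i < Nc by omega, show n < Nc by omega]
    rw [sum_range_succ_sum_range_succ_of_symm _ (fun i j ↦ by rw [ultraLongDist_comm]) n
      (by simp [ultraLongDist]), ih (by omega), sum_congr rfl hrow]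
    rw [sum_const, card_range, nsmul_eq_mul]
    push_cast
    ring

theorem sum_ultraLongDist (hLe : Le ≤ Nc) (t : ℕ) :
    ∑ i ∈ range (Nc + t), ∑ j ∈ range (Nc + t), (ultraLongDist Nc Le i j : ℝ) =
      Nc * (Nc - 1) + (t - 1) * t * (t + 1) / 3 + Nc * t * (t + 1) + 2 * t * (Nc - Le) := by
  induction t with
  | zero => simp [sum_ultraLongDist_clique le_rfl]
  | succ t ih =>
    rw [← add_assoc,
      sum_range_succ_sum_range_succ_of_symm _ (fun i j ↦ by rw [ultraLongDist_comm]) _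
        (by simp [ultraLongDist]),
      ih, sum_ultraLongDist_tail_row hLe]
    push_cast
    ring

end Sums

theorem avgPathLen_ultraLongGraph {N Nc Le : ℕ} (hLe1 : 1 ≤ Le) (hLe2 : Le ≤ Nc) :
    avgPathLen (ultraLongGraph N Nc Le) =
      (∑ i ∈ range N, ∑ j ∈ range N, (ultraLongDist Nc Le i j : ℝ)) / (N * (N - 1)) := by
  unfold avgPathLen
  rw [Fintype.card_fin]
  congr 1
  calc ∑ p ∈ univ.offDiag, ((ultraLongGraph N Nc Le).dist p.1 p.2 : ℝ)
      = ∑ p : Fin N × Fin N, ((ultraLongGraph N Nc Le).dist p.1 p.2 : ℝ) :=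
        sum_subset (subset_univ _) fun p _ hp ↦ by simp_all
    _ = ∑ u : Fin N, ∑ v : Fin N, (ultraLongDist Nc Le u v : ℝ) := by
        rw [Fintype.sum_prod_type]
        exact sum_congr rfl fun u _ ↦ sum_congr rfl fun v _ ↦
          mod_cast ultraLongGraph_dist hLe1 hLe2 u v
    _ = ∑ i ∈ range N, ∑ j ∈ range N, (ultraLongDist Nc Le i j : ℝ) := by
        rw [← Fin.sum_univ_eq_sum_range]
        exact sum_congr rfl fun i _ ↦
          Fin.sum_univ_eq_sum_range (fun j ↦ (ultraLongDist Nc Le i j : ℝ)) N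

theorem stmt_10 (N Nc Le L : ℕ) (hNc : Nc < N) (hLe1 : 1 ≤ Le) (hLe2 : Le ≤ Nc)
    (hL : L = Nc * (Nc - 1) / 2 + ((N - Nc) - 1) + Le) :
    avgPathLen (ultraLongGraph N Nc Le) =
      (1 / ((N : ℝ) * ((N : ℝ) - 1) / 2)) *
        ((Nc * (Nc - 1) / 2 : ℕ) - ((N - Nc : ℕ) : ℝ) * ((L : ℝ) - (N : ℝ)) +
          ((N : ℝ) ^ 3 - (Nc : ℝ) ^ 3 - 7 * ((N - Nc : ℕ) : ℝ)) / 6) := by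
  obtain ⟨t, rfl⟩ : ∃ t, N = Nc + (t + 1) := ⟨N - Nc - 1, by omega⟩
  have hNc1 : (1 : ℝ) ≤ Nc := by exact_mod_cast hLe1.trans hLe2
  have hN₀ : (Nc : ℝ) + (t + 1) ≠ 0 := by positivity
  have hN₁ : (Nc : ℝ) + (t + 1) - 1 ≠ 0 := by linarith [(t.cast_nonneg : (0 : ℝ) ≤ t)]
  simp only [Nat.add_sub_cancel_left, Nat.add_sub_cancel] at hL ⊢
  rw [avgPathLen_ultraLongGraph hLe1 hLe2, sum_ultraLongDist hLe2, hL, ← Nat.choose_two_right]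
  push_cast [Nat.cast_choose_two]
  field_simp
  ring
end

section
/- Let G be a directed ring on N vertices augmented with an M-backwards subgraph on its first M vertices (each vertex vᵢ with i ≤ M points to all vⱼ with j < i), where M ≤ N. Then the total pathlength of G equals that of the plain directed ring minus (M(M-1)/2)·(N - (M+4)/3), i.e., the average pathlength is N/2 - (1/L̃₀)·(M(M-1)/2)·(N - (M+4)/3) with L̃₀ = N(N-1). -/
open Finset

/-- `hasWalkLen A n u v` : there is a directed walk of length `n` from `u` to
`v` along the arc relation `A`. -/
def hasWalkLen {V : Type*} (A : V → V → Prop) : ℕ → V → V → Prop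
  | 0, u, v => u = v
  | n + 1, u, v => ∃ w, A u w ∧ hasWalkLen A n w v

/-- Directed shortest-path distance. -/
noncomputable def ddist {V : Type*} (A : V → V → Prop) (u v : V) : ℕ :=
  sInf {n | hasWalkLen A n u v}

/-- A directed ring on `N` vertices (`i → i+1` and `N-1 → 0`) augmented with an
`M`-backwards subgraph on its first `M` vertices: every `vᵢ` with `i < M`
points to every `vⱼ` with `j < i`. -/
def ringPlusMBS (N M : ℕ) (i j : Fin N) : Prop :=
  j.val = i.val + 1 ∨ (i.val = N - 1 ∧ j.val = 0) ∨ (j.val < i.val ∧ i.val < M)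

/-!
The distance from `vᵢ` to `vⱼ` is `1` when a backward shortcut exists (`j < i < M`) and the
forward ring distance `(j - i) mod N` otherwise: walks of these lengths exist, and no arc lowers
this quantity by more than one, so no walk is shorter. A shortcut therefore saves
`N - 1 - i + j` against the plain ring, whose rows each sum to `N(N-1)/2`; summing the savings
over `j < i < M` gives `(M(M-1)/2)(N - (M+4)/3)`.
-/

section Walks

variable {V : Type*} {A : V → V → Prop}

theorem hasWalkLen_iterate {f : V → V} (hf : ∀ u, A u (f u)) :
    ∀ (k : ℕ) (u : V), hasWalkLen A k u (f^[k] u)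
  | 0, _ => rfl
  | k + 1, u => ⟨f u, hf u, hasWalkLen_iterate hf k (f u)⟩

theorem ddist_self (v : V) : ddist A v v = 0 :=
  Nat.sInf_eq_zero.2 (Or.inl rfl)

-- Bellman's characterisation of the shortest-path distance.
theorem ddist_eq_of_hasWalkLen (d : V → V → ℕ) (hwalk : ∀ u v, hasWalkLen A (d u v) u v)
    (hself : ∀ v, d v v = 0) (harc : ∀ {u w} v, A u w → d u v ≤ d w v + 1) (u v : V) :
    ddist A u v = d u v := by
  have hle : ∀ n u, hasWalkLen A n u v → d u v ≤ n := by
    intro n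
    induction n with
    | zero => rintro u rfl; simp [hself]
    | succ n ih =>
      rintro u ⟨w, huw, hw⟩
      exact (harc v huw).trans (by simpa using ih w hw)
  exact le_antisymm (Nat.sInf_le (hwalk u v)) (le_csInf ⟨_, hwalk u v⟩ fun n hn => hle n u hn)

theorem sum_offDiag_eq_sum_sum {ι R : Type*} [DecidableEq ι] [AddCommMonoid R] (s : Finset ι)
    (f : ι → ι → R) (hf : ∀ i, f i i = 0) :
    ∑ p ∈ s.offDiag, f p.1 p.2 = ∑ i ∈ s, ∑ j ∈ s, f i j := by
  rw [← sum_product' s s f]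
  refine sum_subset (fun p hp => by simp_all [mem_offDiag]) fun p hp hpoff => ?_
  obtain ⟨i, j⟩ := p
  obtain rfl : i = j := by simp_all [mem_offDiag]
  exact hf i

end Walks

theorem sum_range_natCast {K : Type*} [Field K] [CharZero K] (n : ℕ) :
    ∑ k ∈ range n, (k : K) = n * (n - 1) / 2 := by
  induction n with
  | zero => simp
  | succ n ih => rw [sum_range_succ, ih]; push_cast; ring

theorem sum_range_ite_lt {R : Type*} [AddCommMonoid R] {a n : ℕ} (h : a ≤ n) (f : ℕ → R) :
    ∑ b ∈ range n, (if b < a then f b else 0) = ∑ b ∈ range a, f b := by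
  rw [← sum_filter]
  congr 1
  ext b
  simp only [mem_filter, mem_range]
  omega

theorem Fin.val_sub_eq_ite {N : ℕ} (i j : Fin N) :
    (j - i).val = if i ≤ j then j.val - i.val else N + j.val - i.val := by
  split_ifs with h
  · exact Fin.coe_sub_iff_le.2 h
  · exact Fin.coe_sub_iff_lt.2 (not_le.1 h)

section RingPlusMBS

variable {N M : ℕ}

theorem ringPlusMBS_add_one [NeZero N] (i : Fin N) : ringPlusMBS N M i (i + 1) := by
  obtain ⟨n, rfl⟩ := Nat.exists_eq_succ_of_ne_zero (NeZero.ne N)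
  unfold ringPlusMBS
  rw [Fin.val_add_one]
  split_ifs with h
  · exact Or.inr (Or.inl ⟨by simp [h], rfl⟩)
  · exact Or.inl rfl

open Fin.CommRing in
theorem hasWalkLen_ringPlusMBS_sub [NeZero N] (i j : Fin N) :
    hasWalkLen (ringPlusMBS N M) (j - i).val i j := by
  have := hasWalkLen_iterate (A := ringPlusMBS N M) ringPlusMBS_add_one (j - i).val i
  simpa only [add_right_iterate, nsmul_one, Fin.cast_val_eq_self, add_sub_cancel] using this

-- `j - i` is subtraction in `Fin N`, so `(j - i).val` is the forward distance around the ring.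
def ringPlusMBSDist (N M : ℕ) (i j : Fin N) : ℕ :=
  if i.val < M ∧ j < i then 1 else (j - i).val

theorem ddist_ringPlusMBS [NeZero N] (i j : Fin N) :
    ddist (ringPlusMBS N M) i j = ringPlusMBSDist N M i j := by
  refine ddist_eq_of_hasWalkLen _ (fun i j => ?_) (fun i => ?_) (fun {i w} j hiw => ?_) i j
  · unfold ringPlusMBSDist
    split_ifs with h
    · exact ⟨j, Or.inr (Or.inr ⟨h.2, h.1⟩), rfl⟩
    · exact hasWalkLen_ringPlusMBS_sub i j
  · simp [ringPlusMBSDist]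
  · have := i.isLt; have := j.isLt; have := w.isLt
    unfold ringPlusMBS at hiw
    simp only [ringPlusMBSDist, Fin.val_sub_eq_ite, Fin.lt_def, Fin.le_def]
    split_ifs <;> omega

theorem cast_ringPlusMBSDist {R : Type*} [CommRing R] (i j : Fin N) :
    (ringPlusMBSDist N M i j : R) =
      (j - i).val - if i.val < M ∧ j.val < i.val then (N - 1 - i.val + j.val : R) else 0 := by
  simp only [ringPlusMBSDist, Fin.lt_def]
  split_ifs with hshort
  · rw [Fin.coe_sub_iff_lt.2 hshort.2, Nat.cast_sub (by omega)]
    push_cast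
    ring
  · rw [sub_zero]

end RingPlusMBS

section PathlengthSums

variable {K : Type*} [Field K] [CharZero K] {N M : ℕ}

theorem sum_val_sub [NeZero N] (i : Fin N) : ∑ j : Fin N, ((j - i).val : K) = N * (N - 1) / 2 := by
  calc _ = ∑ k : Fin N, (k.val : K) := Fintype.sum_equiv (Equiv.subRight i) _ _ fun _ => rfl
    _ = _ := by rw [Fin.sum_univ_eq_sum_range (fun k => (k : K)), sum_range_natCast]

theorem sum_range_sum_range_sub_add (x : K) (M : ℕ) :
    ∑ a ∈ range M, ∑ b ∈ range a, (x - 1 - a + b) = M * (M - 1) / 2 * (x - (M + 4) / 3) := by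
  induction M with
  | zero => simp
  | succ M ih =>
    rw [sum_range_succ, ih, sum_add_distrib, sum_const, card_range, nsmul_eq_mul,
      sum_range_natCast]
    push_cast
    ring

theorem sum_shortcut_savings (x : K) (hM : M ≤ N) :
    ∑ i : Fin N, ∑ j : Fin N,
        (if i.val < M ∧ j.val < i.val then x - 1 - i.val + j.val else 0) =
      M * (M - 1) / 2 * (x - (M + 4) / 3) := by
  calc _ = ∑ a ∈ range N, if a < M then ∑ b ∈ range N, (if b < a then x - 1 - a + b else 0)
          else 0 := by
        simp only [ite_and, sum_ite_irrel, sum_const_zero, sum_range]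
    _ = ∑ a ∈ range N, if a < M then ∑ b ∈ range a, (x - 1 - a + b) else 0 :=
        sum_congr rfl fun a ha => by rw [sum_range_ite_lt (mem_range.1 ha).le]
    _ = _ := by rw [sum_range_ite_lt hM, sum_range_sum_range_sub_add]

theorem sum_offDiag_ddist_ringPlusMBS [NeZero N] (hM : M ≤ N) :
    ∑ p ∈ univ.offDiag, (ddist (ringPlusMBS N M) p.1 p.2 : K) =
      N * (N * (N - 1) / 2) - M * (M - 1) / 2 * (N - (M + 4) / 3) := by
  rw [sum_offDiag_eq_sum_sum _ (fun i j => (ddist (ringPlusMBS N M) i j : K))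
    fun i => by simp [ddist_self]]
  simp only [ddist_ringPlusMBS, cast_ringPlusMBSDist, sum_sub_distrib, sum_val_sub, sum_const,
    card_univ, Fintype.card_fin, nsmul_eq_mul, sum_shortcut_savings _ hM]

end PathlengthSums

/-- The average pathlength of a directed ring with an `M`-backwards subgraph:
`N/2 - (1/L̃₀)·(M(M-1)/2)·(N - (M+4)/3)`, with `L̃₀ = N(N-1)`. -/
theorem stmt_15 (N M : ℕ) (hN : 2 ≤ N) (hM : M ≤ N) :
    (∑ p ∈ Finset.univ.offDiag, (ddist (ringPlusMBS N M) p.1 p.2 : ℝ)) /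
        ((N : ℝ) * ((N : ℝ) - 1)) =
      (N : ℝ) / 2 -
        (1 / ((N : ℝ) * ((N : ℝ) - 1))) *
          ((M : ℝ) * ((M : ℝ) - 1) / 2) * ((N : ℝ) - ((M : ℝ) + 4) / 3) := by
  have : NeZero N := ⟨by omega⟩
  have hN1 : (N : ℝ) - 1 ≠ 0 := sub_ne_zero.2 (by norm_cast; omega)
  rw [sum_offDiag_ddist_ringPlusMBS hM]
  field_simp
end
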